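/- Let X be a median algebra in which every interval [x,y] is finite (an algebraically discrete median algebra). Then X is chain-solvable: for every pair of distinct points x,y there exist consecutive elements c ≤_x d in a maximal chain of the finite ordered interval ([x,y], ≤_x) such that [c,d] = {c,d}, a two-point chain interval. Consequently X satisfies the median T₂ property. -/

import Mathlib

/-- A median algebra: a set with a ternary operation `m` that is symmetric
(generated by the two transpositions), satisfies `m a b b = b`, and
`m (m a b d) c d = m (m a c d) b d`. -/
structure MedianAlgebra (X : Type*) where
  m : X → X → X → X
  swap12 : ∀ a b c, m a b c = m b a c
  swap23 : ∀ a b c, m a b c = m a c b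
  absorb : ∀ a b, m a b b = b
  med_assoc : ∀ a b c d, m (m a b d) c d = m (m a c d) b d

namespace MedianAlgebra

variable {X : Type*}

/-- The median interval `[a,b] = {c : m a c b = c}`. -/
def interval (M : MedianAlgebra X) (a b : X) : Set X := {c | M.m a c b = c}

/-- A subset is convex if it contains the interval between any two of its points. -/
def IsConvex (M : MedianAlgebra X) (C : Set X) : Prop :=
  ∀ x ∈ C, ∀ y ∈ C, M.interval x y ⊆ C

/-- The shadow `S^a_b = {w : m a w b = b}` (i.e. `b ∈ [a,w]`). -/
def shadow (M : MedianAlgebra X) (a b : X) : Set X := {w | M.m a w b = b}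

/-- The branch `B^a_b = {w : m a w b ≠ b}`, complement of the shadow. -/
def branch (M : MedianAlgebra X) (a b : X) : Set X := {w | M.m a w b ≠ b}

/-- The relation `x ≤_u y` iff `m u x y = x`. -/
def leI (M : MedianAlgebra X) (u x y : X) : Prop := M.m u x y = x

/-- `[u,v]` is a chain interval: `≤_u` is total on `[u,v]` and the
order-median induced by `≤_u` agrees with `m` on `[u,v]`. -/
def IsChainInterval (M : MedianAlgebra X) (u v : X) : Prop :=
  (∀ x ∈ M.interval u v, ∀ y ∈ M.interval u v, M.leI u x y ∨ M.leI u y x) ∧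
  (∀ x ∈ M.interval u v, ∀ y ∈ M.interval u v, ∀ z ∈ M.interval u v,
      M.leI u x y → M.leI u y z → M.m x y z = y)

end MedianAlgebra

open MedianAlgebra

/-! Shrinking `[x,y]` to `[z,y]` through interior points must stop, since intervals are finite, at a
point `c` with `[c,y] = {c,y}`. This two-point interval is a chain, and the gate retraction onto it
sends `x` to `c` (as `c ∈ [x,y]`) and `y` to `y`, so it separates `x` from `y`. -/

namespace MedianAlgebra

variable {X : Type*} (M : MedianAlgebra X)

@[simp]
lemma m_self_left (a b : X) : M.m a a b = a := by
  rw [M.swap23, M.swap12, M.absorb]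

@[simp]
lemma m_self_mid (a b : X) : M.m a b a = a := by
  rw [M.swap12, M.absorb]

lemma left_mem_interval (a b : X) : a ∈ M.interval a b := M.m_self_left a b

lemma right_mem_interval (a b : X) : b ∈ M.interval a b := M.absorb a b

lemma interval_subset_interval_of_mem {x y z : X} (hz : z ∈ M.interval x y) :
    M.interval z y ⊆ M.interval x y := by
  intro w hw
  have h := M.med_assoc z w x y
  rw [hw, M.swap12 z x y, hz, hw] at h
  show M.m x w y = w
  rwa [M.swap12]

lemma eq_of_mem_interval_of_mem_interval {x y z : X} (hz : z ∈ M.interval x y)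
    (hx : x ∈ M.interval z y) : x = z := by
  rw [← hx, M.swap12]
  exact hz

lemma isChainInterval_of_interval_eq_pair {u v : X} (h : M.interval u v = {u, v}) :
    M.IsChainInterval u v := by
  simp only [IsChainInterval, leI, h, Set.mem_insert_iff, Set.mem_singleton_iff]
  constructor
  · rintro a (rfl | rfl) b (rfl | rfl) <;> simp [M.absorb]
  · rintro a (rfl | rfl) b (rfl | rfl) e (rfl | rfl) <;> simp_all [M.absorb]

theorem exists_adjacent_of_ne {x y : X} (hfin : (M.interval x y).Finite) (hxy : x ≠ y) :
    ∃ c ∈ M.interval x y, c ≠ y ∧ M.interval c y = {c, y} := by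
  by_cases hpair : M.interval x y = {x, y}
  · exact ⟨x, M.left_mem_interval x y, hxy, hpair⟩
  have hends : {x, y} ⊆ M.interval x y :=
    Set.pair_subset (M.left_mem_interval x y) (M.right_mem_interval x y)
  obtain ⟨z, hz, hzxy⟩ := Set.exists_of_ssubset (hends.ssubset_of_ne (Ne.symm hpair))
  simp only [Set.mem_insert_iff, Set.mem_singleton_iff, not_or] at hzxy
  have hsub := M.interval_subset_interval_of_mem hz
  have hx : x ∉ M.interval z y := fun hx ↦ hzxy.1 (M.eq_of_mem_interval_of_mem_interval hz hx).symm
  have : (M.interval z y).ncard < (M.interval x y).ncard :=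
    Set.ncard_lt_ncard ((Set.ssubset_iff_of_subset hsub).2 ⟨x, M.left_mem_interval x y, hx⟩) hfin
  obtain ⟨c, hc, hcy, hadj⟩ := exists_adjacent_of_ne (hfin.subset hsub) hzxy.2
  exact ⟨c, hsub hc, hcy, hadj⟩
termination_by (M.interval x y).ncard

end MedianAlgebra

/-- An algebraically discrete median algebra (all intervals finite) is
chain-solvable via a two-point (adjacent) chain interval; consequently it
satisfies the median T₂ property. -/
theorem aDiscrete_chainSolvable_and_medT2 {X : Type*} (M : MedianAlgebra X)
    (hfin : ∀ x y : X, (M.interval x y).Finite) :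
    (∀ x y : X, x ≠ y → ∃ c d : X,
        c ∈ M.interval x y ∧ d ∈ M.interval x y ∧ c ≠ d ∧
        M.leI x c d ∧ M.interval c d = {c, d}) ∧
    (∀ x y : X, x ≠ y → ∃ u v : X, u ≠ v ∧ M.IsChainInterval u v ∧
        ({M.m u x v, M.m u y v} : Set X) = {u, v}) := by
  constructor
  · intro x y hxy
    obtain ⟨c, hc, hcy, hadj⟩ := M.exists_adjacent_of_ne (hfin x y) hxy
    exact ⟨c, y, hc, M.right_mem_interval x y, hcy, hc, hadj⟩
  · intro x y hxy
    obtain ⟨c, hc, hcy, hadj⟩ := M.exists_adjacent_of_ne (hfin x y) hxy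
    refine ⟨c, y, hcy, M.isChainInterval_of_interval_eq_pair hadj, ?_⟩
    have hcx : M.m c x y = c := by rw [M.swap12]; exact hc
    rw [hcx, M.absorb]
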